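/- Let J be a nonempty finite index set, and for each j ∈ J let a_j > 0 and b_j ∈ ℝ. Then there exists a unique real number w with w < min_{j ∈ J} b_j such that Σ_{j ∈ J} a_j/(b_j − w) = 1. -/

import Mathlib

open scoped BigOperators Classical
open Filter

noncomputable section

def IsRowStochastic {M : ℕ} (P : Matrix (Fin M) (Fin M) ℝ) : Prop :=
  (∀ i j, 0 ≤ P i j) ∧ ∀ i, ∑ j, P i j = 1

def IsIrreducibleMat {M : ℕ} (P : Matrix (Fin M) (Fin M) ℝ) : Prop :=
  ∀ i j, ∃ n : ℕ, 1 ≤ n ∧ 0 < (P ^ n) i j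

def IsStationaryVec {M : ℕ} (P : Matrix (Fin M) (Fin M) ℝ) (π : Fin M → ℝ) : Prop :=
  (∀ i, 0 ≤ π i) ∧ (∑ i, π i = 1) ∧ ∀ j, ∑ i, π i * P i j = π j

def PiMat {M : ℕ} (r : Fin M → ℝ) (θ : ℝ) (A : Matrix (Fin M) (Fin M) ℝ) :
    Matrix (Fin M) (Fin M) ℝ :=
  Matrix.of fun i j => A i j * Real.exp (θ * r j)

def LambdaA {M : ℕ} (r : Fin M → ℝ) (θ : ℝ) (A : Matrix (Fin M) (Fin M) ℝ) : ℝ :=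
  Real.log ((spectralRadius ℝ (PiMat r θ A)).toReal)

def thetaStar {M : ℕ} (r : Fin M → ℝ) (c : ℝ) (A : Matrix (Fin M) (Fin M) ℝ) : ℝ :=
  sSup ({0} ∪ {θ : ℝ | 0 < θ ∧ LambdaA r θ A < θ * c})

def q1 {M : ℕ} (q : Fin M → Fin M → ℝ) (i : Fin M) : ℝ := ∑ j, q i j

def qf {M : ℕ} (q : Fin M → Fin M → ℝ) (i j : Fin M) : ℝ := q i j / q1 q i

def Qf {M : ℕ} (q : Fin M → Fin M → ℝ) : Matrix (Fin M) (Fin M) ℝ :=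
  Matrix.of fun i j => qf q i j

def Dset {M : ℕ} (q : Fin M → Fin M → ℝ) : Set (Matrix (Fin M) (Fin M) ℝ) :=
  {p | IsRowStochastic p ∧ ∀ i j, 0 < q i j → 0 < p i j}

def I3hat {M : ℕ} (q : Fin M → Fin M → ℝ) (p : Matrix (Fin M) (Fin M) ℝ) : ℝ :=
  ∑ i, q1 q i * ∑ j ∈ Finset.univ.filter (fun j => 0 < q i j),
    qf q i j * Real.log (qf q i j / p i j)

def thetaBar {M : ℕ} (r : Fin M → ℝ) (c : ℝ) (q : Fin M → Fin M → ℝ) (l s : ℝ)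
    (p : Matrix (Fin M) (Fin M) ℝ) : ℝ :=
  l * s * thetaStar r c p + I3hat q p

def I1set {M : ℕ} (r : Fin M → ℝ) (c : ℝ) : Set (Matrix (Fin M) (Fin M) ℝ) :=
  {P | IsRowStochastic P ∧ IsIrreducibleMat P ∧ ∃ π, IsStationaryVec P π ∧ ∑ i, π i * r i < c}

def I2set {M : ℕ} (r : Fin M → ℝ) (c : ℝ) : Set (Matrix (Fin M) (Fin M) ℝ) :=
  {P | IsRowStochastic P ∧ IsIrreducibleMat P ∧ ∃ π, IsStationaryVec P π ∧ c < ∑ i, π i * r i}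

def I3set {M : ℕ} (r : Fin M → ℝ) (c : ℝ) : Set (Matrix (Fin M) (Fin M) ℝ) :=
  {P | IsRowStochastic P ∧ IsIrreducibleMat P ∧ ∃ π, IsStationaryVec P π ∧ ∑ i, π i * r i = c}

def toMat {M : ℕ} (x : EuclideanSpace ℝ (Fin M × Fin M)) : Matrix (Fin M) (Fin M) ℝ :=
  Matrix.of fun i j => x (i, j)

def toEuc {M : ℕ} (A : Matrix (Fin M) (Fin M) ℝ) : EuclideanSpace ℝ (Fin M × Fin M) :=
  (WithLp.equiv 2 ((Fin M × Fin M) → ℝ)).symm (fun ij => A ij.1 ij.2)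

def frobInner {M : ℕ} (A B : Matrix (Fin M) (Fin M) ℝ) : ℝ := ∑ i, ∑ j, A i j * B i j

/-! On `(-∞, min b)` the map `w ↦ ∑ a j / (b j - w)` is continuous and strictly increasing,
tends to `0` at `-∞` and to `+∞` as `w` approaches the smallest `b j` from below, so it is a
bijection onto `(0, ∞)` and takes the value `1` exactly once. -/

open Set Topology

section SumDivSub

variable {ι : Type*} {J : Finset ι} {a b : ι → ℝ}

theorem strictMonoOn_sum_div_sub {m : ℝ} (hJ : J.Nonempty) (ha : ∀ j ∈ J, 0 < a j)
    (hm : ∀ j ∈ J, m ≤ b j) : StrictMonoOn (fun w => ∑ j ∈ J, a j / (b j - w)) (Iio m) :=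
  fun x _ y hy hxy => Finset.sum_lt_sum_of_nonempty hJ fun j hj =>
    div_lt_div_of_pos_left (ha j hj) (by linarith [hm j hj, mem_Iio.mp hy]) (by linarith)

theorem continuousOn_sum_div_sub {m : ℝ} (hm : ∀ j ∈ J, m ≤ b j) :
    ContinuousOn (fun w => ∑ j ∈ J, a j / (b j - w)) (Iio m) :=
  continuousOn_finsetSum J fun j hj => continuousOn_const.div (by fun_prop)
    fun w hw => (sub_pos.mpr (lt_of_lt_of_le hw (hm j hj))).ne'

theorem tendsto_sum_div_sub_atBot :
    Tendsto (fun w => ∑ j ∈ J, a j / (b j - w)) atBot (𝓝 0) := by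
  simpa [sub_eq_add_neg] using tendsto_finsetSum J fun j _ =>
    tendsto_const_nhds.div_atTop (tendsto_atTop_add_const_left _ (b j) tendsto_neg_atBot_atTop)

theorem tendsto_const_div_sub_nhdsLT {c m : ℝ} (hc : 0 < c) :
    Tendsto (fun w => c / (m - w)) (𝓝[<] m) atTop := by
  have hsub : Tendsto (fun w => m - w) (𝓝[<] m) (𝓝[>] 0) := by
    refine tendsto_nhdsWithin_iff.mpr ⟨?_, ?_⟩
    · simpa using ((continuous_sub_left m).tendsto m).mono_left nhdsWithin_le_nhds
    · filter_upwards [self_mem_nhdsWithin] with w hw using sub_pos.mpr (mem_Iio.mp hw)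
  simpa [div_eq_mul_inv] using (tendsto_inv_nhdsGT_zero.comp hsub).const_mul_atTop hc

theorem tendsto_sum_div_sub_nhdsLT {j₀ : ι} (hj₀ : j₀ ∈ J) (ha : ∀ j ∈ J, 0 < a j)
    (hmin : ∀ j ∈ J, b j₀ ≤ b j) :
    Tendsto (fun w => ∑ j ∈ J, a j / (b j - w)) (𝓝[<] b j₀) atTop := by
  refine tendsto_atTop_mono' _ ?_ (tendsto_const_div_sub_nhdsLT (ha j₀ hj₀))
  filter_upwards [self_mem_nhdsWithin] with w hw
  exact Finset.single_le_sum (f := fun j => a j / (b j - w))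
    (fun j hj => (div_pos (ha j hj) (by linarith [hmin j hj, mem_Iio.mp hw])).le) hj₀

theorem bijOn_sum_div_sub {j₀ : ι} (hj₀ : j₀ ∈ J) (ha : ∀ j ∈ J, 0 < a j)
    (hmin : ∀ j ∈ J, b j₀ ≤ b j) :
    BijOn (fun w => ∑ j ∈ J, a j / (b j - w)) (Iio (b j₀)) (Ioi 0) := by
  refine ⟨fun w hw => ?_, (strictMonoOn_sum_div_sub ⟨j₀, hj₀⟩ ha hmin).injOn, ?_⟩
  · exact Finset.sum_pos (fun j hj => div_pos (ha j hj) (by linarith [hmin j hj, mem_Iio.mp hw]))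
      ⟨j₀, hj₀⟩
  · exact isPreconnected_Iio.intermediate_value_Ioi (l₁ := atBot) (l₂ := 𝓝[<] b j₀)
      (le_principal_iff.mpr (Iio_mem_atBot _)) inf_le_right
      (continuousOn_sum_div_sub hmin) tendsto_sum_div_sub_atBot
      (tendsto_sum_div_sub_nhdsLT hj₀ ha hmin)

end SumDivSub

theorem stmt15_general {ι : Type*} (J : Finset ι) (hJ : J.Nonempty)
    (a b : ι → ℝ) (ha : ∀ j ∈ J, 0 < a j) :
    ∃! w : ℝ, (∀ j ∈ J, w < b j) ∧ ∑ j ∈ J, a j / (b j - w) = 1 := by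
  obtain ⟨j₀, hj₀, hmin⟩ := J.exists_min_image b hJ
  have hbelow : ∀ w, (∀ j ∈ J, w < b j) ↔ w ∈ Iio (b j₀) :=
    fun w => ⟨fun h => h j₀ hj₀, fun h j hj => h.trans_le (hmin j hj)⟩
  have hbij := bijOn_sum_div_sub hj₀ ha hmin
  obtain ⟨w, hw, hw1⟩ := hbij.surjOn (mem_Ioi.mpr one_pos)
  refine ⟨w, ⟨(hbelow w).mpr hw, hw1⟩, fun v ⟨hv, hv1⟩ => ?_⟩
  exact hbij.injOn ((hbelow v).mp hv) hw (hv1.trans hw1.symm)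

theorem stmt15 {ι : Type*} [DecidableEq ι] (J : Finset ι) (hJ : J.Nonempty)
    (a b : ι → ℝ) (ha : ∀ j ∈ J, 0 < a j) :
    ∃! w : ℝ, (∀ j ∈ J, w < b j) ∧ ∑ j ∈ J, a j / (b j - w) = 1 :=
  stmt15_general J hJ a b ha
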